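/- arXiv:1509.03490 — 7 statements merged into one kernel-verified Lean document; each statement's English description precedes it below -/
import Mathlib

section
/- Let F be a field and let A be an invertible n×n matrix over F. Then there exist invertible upper triangular matrices T, T' over F and a permutation matrix P such that A = T P T'. (Bruhat decomposition for GL(n,F).) -/
/-!
Gaussian elimination using upper triangular operations only. Sweep the columns from left to
right. In column `k` take the lowest nonzero entry `M i k` as pivot: scaling row `i`, adding
multiples of it to the rows above, and adding multiples of column `k` to the columns on its
right are upper triangular operations, and together they turn row `i` and column `k` into unit
vectors. Row `i` is not the pivot row of an earlier column, since those rows vanish in column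
`k`; so it vanishes in the earlier columns, which the operations therefore leave untouched. At
the end every row and every column holds a single `1`: the matrix is a permutation matrix.
-/

open Finset

namespace Matrix

variable {ι : Type*} [DecidableEq ι]

theorem isUnit_of_isUpperTriangular {R : Type*} [CommRing R] [Fintype ι] [LinearOrder ι]
    {M : Matrix ι ι R} (hM : M.IsUpperTriangular) (hd : ∀ i, IsUnit (M i i)) : IsUnit M := by
  rw [isUnit_iff_isUnit_det, det_of_isUpperTriangular hM]
  exact IsUnit.prod_univ_iff.mpr hd

def IsPivot {R : Type*} [Zero R] [One R] (M : Matrix ι ι R) (i j : ι) : Prop :=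
  M i j = 1 ∧ (∀ x, x ≠ i → M x j = 0) ∧ ∀ y, y ≠ j → M i y = 0

theorem exists_perm_eq_of_forall_isPivot {R : Type*} [Zero R] [One R] [NeZero (1 : R)]
    [Finite ι] {M : Matrix ι ι R} (h : ∀ j, ∃ i, M.IsPivot i j) :
    ∃ σ : Equiv.Perm ι, M = of fun i j => if i = σ j then 1 else 0 := by
  choose r hr using h
  have hr_inj : r.Injective := fun j j' hjj' => by
    by_contra hne
    have h0 := (hr j).2.2 j' (Ne.symm hne)
    rw [hjj', (hr j').1] at h0
    exact one_ne_zero h0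
  refine ⟨Equiv.ofBijective r (Finite.injective_iff_bijective.mp hr_inj), ?_⟩
  ext x j
  simp only [of_apply, Equiv.ofBijective_apply]
  split_ifs with hx
  · exact hx ▸ (hr j).1
  · exact (hr j).2.1 x hx

variable {F : Type*} [Field F]

section Pivot

def pivotRowOp (M : Matrix ι ι F) (i k : ι) : Matrix ι ι F :=
  1 + vecMulVec (fun x => if x = i then (M i k)⁻¹ - 1 else -(M x k / M i k)) (Pi.single i 1)

def pivotColOp (M : Matrix ι ι F) (i k : ι) : Matrix ι ι F :=
  1 - vecMulVec (Pi.single k 1) (fun y => if y = k then 0 else M i y / M i k)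

def pivot (M : Matrix ι ι F) (i k : ι) : Matrix ι ι F :=
  of fun x y => if x = i then (if y = k then 1 else 0)
    else if y = k then 0 else M x y - M x k * M i y / M i k

variable {M : Matrix ι ι F} {i k : ι}

theorem pivotRowOp_mul_mul_pivotColOp [Fintype ι] (hik : M i k ≠ 0) :
    M.pivotRowOp i k * M * M.pivotColOp i k = M.pivot i k := by
  rw [pivotRowOp, pivotColOp, Matrix.add_mul, Matrix.one_mul, vecMulVec_mul, single_one_vecMul,
    Matrix.mul_sub, Matrix.mul_one, mul_vecMulVec, mulVec_single_one]
  ext x y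
  rcases eq_or_ne x i with rfl | hx <;> rcases eq_or_ne y k with rfl | hy <;>
    simp only [pivot, of_apply, add_apply, sub_apply, vecMulVec_apply, row_apply, col_apply,
      ↓reduceIte, *] <;> field_simp <;> ring

theorem isPivot_pivot : (M.pivot i k).IsPivot i k := by
  simp +contextual [IsPivot, pivot]

theorem IsPivot.pivot {r j : ι} (h : M.IsPivot r j) (hri : r ≠ i) (hjk : j ≠ k) :
    (M.pivot i k).IsPivot r j := by
  obtain ⟨h1, hcol, hrow⟩ := h
  refine ⟨?_, fun x hx => ?_, fun y hy => ?_⟩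
  · simp [Matrix.pivot, hri, hjk, h1, hcol i hri.symm]
  · rcases eq_or_ne x i with rfl | hxi
    · simp [Matrix.pivot, hjk]
    · simp [Matrix.pivot, hxi, hjk, hcol x hx, hcol i hri.symm]
  · simp [Matrix.pivot, hri, hrow y hy, hrow k hjk.symm]

variable [LinearOrder ι]

theorem pivotRowOp_isUpperTriangular (hbelow : ∀ x, i < x → M x k = 0) :
    (M.pivotRowOp i k).IsUpperTriangular := by
  intro x z (hzx : z < x)
  rcases eq_or_ne z i with rfl | hz
  · simp [pivotRowOp, hzx.ne', hbelow x hzx, vecMulVec_apply]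
  · simp [pivotRowOp, hz, vecMulVec_apply, one_apply_ne hzx.ne']

theorem pivotColOp_isUpperTriangular (hleft : ∀ y, y < k → M i y = 0) :
    (M.pivotColOp i k).IsUpperTriangular := by
  intro z y (hyz : y < z)
  rcases eq_or_ne z k with rfl | hz
  · simp [pivotColOp, hleft y hyz, vecMulVec_apply, one_apply_ne hyz.ne']
  · simp [pivotColOp, hz, vecMulVec_apply, one_apply_ne hyz.ne']

variable [Fintype ι]

theorem isUnit_pivotRowOp (hbelow : ∀ x, i < x → M x k = 0) (hik : M i k ≠ 0) :
    IsUnit (M.pivotRowOp i k) := by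
  refine isUnit_of_isUpperTriangular (pivotRowOp_isUpperTriangular hbelow) fun x => ?_
  rcases eq_or_ne x i with rfl | hx
  · simpa [pivotRowOp, vecMulVec_apply] using hik
  · simp [pivotRowOp, hx, vecMulVec_apply]

theorem isUnit_pivotColOp (hleft : ∀ y, y < k → M i y = 0) : IsUnit (M.pivotColOp i k) := by
  refine isUnit_of_isUpperTriangular (pivotColOp_isUpperTriangular hleft) fun y => ?_
  rcases eq_or_ne y k with rfl | hy
  · simp [pivotColOp, vecMulVec_apply]
  · simp [pivotColOp, hy, vecMulVec_apply]

end Pivot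

variable [Fintype ι] [LinearOrder ι]

def BorelEquiv (A M : Matrix ι ι F) : Prop :=
  ∃ T T' : Matrix ι ι F, T.IsUpperTriangular ∧ T'.IsUpperTriangular ∧ IsUnit T ∧ IsUnit T' ∧
    A = T * M * T'

namespace BorelEquiv

variable {A M N : Matrix ι ι F}

theorem refl (A : Matrix ι ι F) : BorelEquiv A A :=
  ⟨1, 1, blockTriangular_one, blockTriangular_one, isUnit_one, isUnit_one, by simp⟩

theorem trans (hAM : BorelEquiv A M) (hMN : BorelEquiv M N) : BorelEquiv A N := by
  obtain ⟨T, T', hT, hT', hTu, hT'u, rfl⟩ := hAM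
  obtain ⟨S, S', hS, hS', hSu, hS'u, rfl⟩ := hMN
  exact ⟨T * S, S' * T', hT.mul hS, hS'.mul hT', hTu.mul hSu, hS'u.mul hT'u, by
    simp only [Matrix.mul_assoc]⟩

theorem isUnit (hAM : BorelEquiv A M) (hA : IsUnit A) : IsUnit M := by
  obtain ⟨T, T', -, -, -, -, rfl⟩ := hAM
  exact isUnit_of_mul_isUnit_right (isUnit_of_mul_isUnit_left hA)

theorem of_mul_mul {U V : Matrix ι ι F} (hU : U.IsUpperTriangular) (hV : V.IsUpperTriangular)
    (hUu : IsUnit U) (hVu : IsUnit V) : BorelEquiv M (U * M * V) := by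
  have hUd := (isUnit_iff_isUnit_det U).mp hUu
  have hVd := (isUnit_iff_isUnit_det V).mp hVu
  have := U.invertibleOfIsUnitDet hUd
  have := V.invertibleOfIsUnitDet hVd
  refine ⟨U⁻¹, V⁻¹, blockTriangular_inv_of_blockTriangular hU,
    blockTriangular_inv_of_blockTriangular hV, isUnit_nonsing_inv_iff.mpr hUu,
    isUnit_nonsing_inv_iff.mpr hVu, ?_⟩
  rw [Matrix.mul_assoc, mul_nonsing_inv_cancel_right V _ hVd,
    nonsing_inv_mul_cancel_left U _ hUd]

end BorelEquiv

theorem exists_borelEquiv_forall_le_isPivot {M : Matrix ι ι F} {k : ι} (hM : IsUnit M)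
    (h : ∀ j < k, ∃ i, M.IsPivot i j) : ∃ N, BorelEquiv M N ∧ ∀ j ≤ k, ∃ i, N.IsPivot i j := by
  classical
  obtain ⟨x₀, hx₀⟩ : ∃ x, M x k ≠ 0 := by
    by_contra! h0
    exact ((isUnit_iff_isUnit_det M).mp hM).ne_zero (det_eq_zero_of_column_eq_zero k h0)
  obtain ⟨i, hik, hmax⟩ :=
    exists_max_image (univ.filter (M · k ≠ 0)) id ⟨x₀, by simpa using hx₀⟩
  simp only [mem_filter, mem_univ, true_and, id] at hik hmax
  have hbelow : ∀ x, i < x → M x k = 0 := fun x hx =>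
    by_contra fun hxk => (hmax x hxk).not_gt hx
  have hri : ∀ j < k, ∀ r, M.IsPivot r j → r ≠ i := fun j hj r hr hr_eq =>
    hik (hr_eq ▸ hr.2.2 k hj.ne')
  have hleft : ∀ y < k, M i y = 0 := fun y hy => by
    obtain ⟨r, hr⟩ := h y hy
    exact hr.2.1 i (hri y hy r hr).symm
  refine ⟨M.pivot i k, pivotRowOp_mul_mul_pivotColOp hik ▸ BorelEquiv.of_mul_mul
    (pivotRowOp_isUpperTriangular hbelow) (pivotColOp_isUpperTriangular hleft)
    (isUnit_pivotRowOp hbelow hik) (isUnit_pivotColOp hleft), fun j hj => ?_⟩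
  rcases hj.lt_or_eq with hj | rfl
  · obtain ⟨r, hr⟩ := h j hj
    exact ⟨r, hr.pivot (hri j hj r hr) hj.ne⟩
  · exact ⟨i, isPivot_pivot⟩

theorem exists_borelEquiv_forall_isPivot {A : Matrix ι ι F} (hA : IsUnit A) :
    ∃ M, BorelEquiv A M ∧ ∀ j, ∃ i, M.IsPivot i j := by
  suffices h : ∀ s : Finset ι, IsLowerSet (s : Set ι) →
      ∃ M, BorelEquiv A M ∧ ∀ j ∈ s, ∃ i, M.IsPivot i j by
    simpa using h univ (by simp [isLowerSet_univ])
  intro s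
  induction s using Finset.induction_on_max with
  | empty => exact fun _ => ⟨A, .refl A, by simp⟩
  | insert k s hlt ih =>
    intro hs
    have hmem : ∀ j < k, j ∈ s := fun j hj =>
      (mem_insert.mp (hs hj.le (mem_insert_self k s))).resolve_left hj.ne
    obtain ⟨M, hAM, hM⟩ := ih fun a b hba ha => hmem b (hba.trans_lt (hlt a ha))
    obtain ⟨N, hMN, hN⟩ :=
      exists_borelEquiv_forall_le_isPivot (hAM.isUnit hA) fun j hj => hM j (hmem j hj)
    refine ⟨N, hAM.trans hMN, fun j hj => hN j ?_⟩
    rcases mem_insert.mp hj with rfl | hj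
    exacts [le_rfl, (hlt j hj).le]

end Matrix

/-- Bruhat decomposition for GL(n, F): every invertible matrix over a field
factors as `T * P * T'` with `T, T'` invertible upper triangular and `P` a
permutation matrix. -/
theorem bruhat_decomposition {F : Type*} [Field F] {n : ℕ}
    (A : Matrix (Fin n) (Fin n) F) (hA : IsUnit A) :
    ∃ (T T' : Matrix (Fin n) (Fin n) F) (σ : Equiv.Perm (Fin n)),
      T.BlockTriangular id ∧ T'.BlockTriangular id ∧ IsUnit T ∧ IsUnit T' ∧
      A = T * (Matrix.of fun i j => if i = σ j then (1 : F) else 0) * T' := by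
  obtain ⟨M, ⟨T, T', hT, hT', hTu, hT'u, rfl⟩, hM⟩ := Matrix.exists_borelEquiv_forall_isPivot hA
  obtain ⟨σ, rfl⟩ := Matrix.exists_perm_eq_of_forall_isPivot hM
  exact ⟨T, T', σ, hT, hT', hTu, hT'u, rfl⟩
end

section
/- Let F be a field and A an invertible n×n matrix over F. If T P T' = S Q S' with T, T', S, S' invertible upper triangular matrices and P, Q permutation matrices, then P = Q. (Uniqueness of the permutation in the Bruhat decomposition; equivalently, the double coset space T(n)\GL(n,F)/T(n) is in bijection with the symmetric group S_n.) -/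
/-!
Cancelling, `T P T' = S Q S'` becomes `B P = Q C` with `B = S⁻¹ T` and `C = S' T'⁻¹` upper
triangular and `C` invertible. If the `1` in column `j` sits in row `p j` of `P` and in row `q j`
of `Q`, the entry `(q j, j)` of this identity reads `B (q j) (p j) = C j j ≠ 0`, so
`q j ≤ p j`. Exchanging the two decompositions gives `p j ≤ q j`, hence `P = Q`.
-/

open Equiv

namespace Matrix

variable {n R : Type*}

lemma of_ite_eq_permMatrix_inv [DecidableEq n] [Zero R] [One R] (σ : Perm n) :
    (of fun i j => if i = σ j then (1 : R) else 0) = (σ⁻¹).permMatrix R := by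
  ext i j
  simp [PEquiv.toMatrix_apply, Equiv.symm_apply_eq]

variable [Fintype n] [CommRing R]

lemma BlockTriangular.nonsing_inv [DecidableEq n] {α : Type*} [LinearOrder α] {b : n → α}
    {M : Matrix n n R} (hM : M.BlockTriangular b) : M⁻¹.BlockTriangular b := by
  by_cases hdet : IsUnit M.det
  · let := M.invertibleOfIsUnitDet hdet
    exact blockTriangular_inv_of_blockTriangular hM
  · rw [nonsing_inv_apply_not_isUnit M hdet]
    exact blockTriangular_zero

variable [LinearOrder n]

lemma IsUpperTriangular.apply_self_ne_zero [Nontrivial R] {M : Matrix n n R}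
    (hM : M.IsUpperTriangular) (hMu : IsUnit M) (i : n) : M i i ≠ 0 := by
  have hdet : M.det ≠ 0 := ((isUnit_iff_isUnit_det M).mp hMu).ne_zero
  rw [det_of_isUpperTriangular hM] at hdet
  exact fun h => hdet (Finset.prod_eq_zero (Finset.mem_univ i) h)

lemma inv_apply_le_of_mul_permMatrix_eq_permMatrix_mul {B C : Matrix n n R}
    (hB : B.IsUpperTriangular) (hC : ∀ i, C i i ≠ 0) {σ τ : Perm n}
    (h : B * σ.permMatrix R = τ.permMatrix R * C) (j : n) : τ⁻¹ j ≤ σ⁻¹ j := by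
  have hentry : B (τ⁻¹ j) (σ⁻¹ j) = C j j := by
    simpa [PEquiv.mul_toMatrix_toPEquiv, PEquiv.toMatrix_toPEquiv_mul] using
      congr_fun₂ h (τ⁻¹ j) j
  by_contra hlt
  exact hC j (hentry ▸ hB (not_le.mp hlt))

lemma inv_apply_le_of_mul_permMatrix_mul_eq [Nontrivial R] {T T' S S' : Matrix n n R}
    (hT : T.IsUpperTriangular) (hT' : T'.IsUpperTriangular)
    (hS : S.IsUpperTriangular) (hS' : S'.IsUpperTriangular)
    (hT'u : IsUnit T') (hSu : IsUnit S) (hS'u : IsUnit S') {σ τ : Perm n}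
    (h : T * σ.permMatrix R * T' = S * τ.permMatrix R * S') (j : n) :
    τ⁻¹ j ≤ σ⁻¹ j := by
  have hSdet := (isUnit_iff_isUnit_det S).mp hSu
  have hT'det := (isUnit_iff_isUnit_det T').mp hT'u
  have hB : (S⁻¹ * T).IsUpperTriangular := hS.nonsing_inv.mul hT
  have hC : (S' * T'⁻¹).IsUpperTriangular := hS'.mul hT'.nonsing_inv
  have hCu : IsUnit (S' * T'⁻¹) := hS'u.mul (isUnit_nonsing_inv_iff.mpr hT'u)
  refine inv_apply_le_of_mul_permMatrix_eq_permMatrix_mul hB (hC.apply_self_ne_zero hCu) ?_ j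
  calc S⁻¹ * T * σ.permMatrix R
      = S⁻¹ * (T * σ.permMatrix R * T') * T'⁻¹ := by
        simp only [Matrix.mul_assoc, mul_nonsing_inv _ hT'det, Matrix.mul_one]
    _ = S⁻¹ * (S * τ.permMatrix R * S') * T'⁻¹ := by rw [h]
    _ = τ.permMatrix R * (S' * T'⁻¹) := by
        simp only [Matrix.mul_assoc, nonsing_inv_mul_cancel_left _ _ hSdet]

end Matrix

open Matrix in
/-- Uniqueness of the permutation in the Bruhat decomposition:
if `T * P * T' = S * Q * S'` with `T, T', S, S'` invertible upper triangular
and `P, Q` permutation matrices, then `P = Q`. -/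
theorem bruhat_permutation_unique {F : Type*} [Field F] {n : ℕ}
    (T T' S S' : Matrix (Fin n) (Fin n) F) (σ τ : Equiv.Perm (Fin n))
    (hT : T.BlockTriangular id) (hT' : T'.BlockTriangular id)
    (hS : S.BlockTriangular id) (hS' : S'.BlockTriangular id)
    (hTu : IsUnit T) (hT'u : IsUnit T') (hSu : IsUnit S) (hS'u : IsUnit S')
    (h : T * (Matrix.of fun i j => if i = σ j then (1 : F) else 0) * T'
        = S * (Matrix.of fun i j => if i = τ j then (1 : F) else 0) * S') :
    (Matrix.of fun i j => if i = σ j then (1 : F) else 0)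
      = (Matrix.of fun i j => if i = τ j then (1 : F) else 0) := by
  rw [of_ite_eq_permMatrix_inv, of_ite_eq_permMatrix_inv] at h ⊢
  have hτσ := inv_apply_le_of_mul_permMatrix_mul_eq hT hT' hS hS' hT'u hSu hS'u h
  have hστ := inv_apply_le_of_mul_permMatrix_mul_eq hS hS' hT hT' hS'u hTu hT'u h.symm
  have : σ = τ := Perm.ext fun j => le_antisymm (by simpa using hστ j) (by simpa using hτσ j)
  rw [this]
end

section
/- Let F be a field and let D : F^m → F^n be a linear map given by a matrix with respect to the standard bases. Then there exist invertible upper triangular matrices T ∈ GL(m,F) and S ∈ GL(n,F) such that the matrix S⁻¹ D T is 'simple': every column is either zero or a standard basis vector, and the nonzero columns are pairwise distinct standard basis vectors. -/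
/-!
Gaussian elimination, one column at a time from the left. Suppose the columns before `q` are
already simple. Adding multiples of these earlier columns to column `q` (an upper triangular
column operation) kills its entries in their pivot rows. If column `q` is still nonzero, let `i`
be its last nonzero row: adding multiples of row `i` to the rows above it and rescaling row `i`
(an upper triangular row operation) turns column `q` into `eᵢ`, and leaves the earlier columns
alone because they vanish in row `i`.
-/

/-- A matrix is *simple* if every column is zero or a standard basis vector,
and distinct nonzero columns are distinct standard basis vectors. -/
def Matrix.IsSimpleCol {F : Type*} [Field F] {n m : ℕ}
    (M : Matrix (Fin n) (Fin m) F) : Prop :=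
  (∀ j, (fun i => M i j) = 0 ∨ ∃ i, (fun i' => M i' j) = Pi.single i (1 : F)) ∧
  ∀ j j', (fun i => M i j) ≠ 0 → (fun i => M i j) = (fun i => M i j') → j = j'

namespace Matrix

section Elementary

variable {ι : Type*} [DecidableEq ι] {R : Type*} [CommRing R]

theorem one_add_vecMulVec_single_mulVec [Fintype ι] (u x : ι → R) (i : ι) :
    (1 + vecMulVec u (Pi.single i 1)) *ᵥ x = x + x i • u := by
  ext a
  simp [add_mulVec, vecMulVec_mulVec, mul_comm]

theorem mul_one_add_vecMulVec_single_apply [Fintype ι] {κ : Type*} (M : Matrix κ ι R)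
    (c : ι → R) (q : ι) (a : κ) (j : ι) :
    (M * (1 + vecMulVec c (Pi.single q 1)) : Matrix κ ι R) a j =
      M a j + (M *ᵥ c) a * (Pi.single q 1 : ι → R) j := by
  rw [Matrix.mul_add, Matrix.mul_one, mul_vecMulVec, add_apply, vecMulVec_apply]

theorem blockTriangular_one_add_vecMulVec_single [LinearOrder ι] {u : ι → R} {i : ι}
    (hu : ∀ a, i < a → u a = 0) : (1 + vecMulVec u (Pi.single i 1)).BlockTriangular id := by
  intro a b (hba : b < a)
  rw [add_apply, one_apply_ne hba.ne', vecMulVec_apply, zero_add]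
  rcases eq_or_ne b i with rfl | hbi
  · rw [hu a hba, zero_mul]
  · rw [Pi.single_eq_of_ne hbi, mul_zero]

theorem isUnit_one_add_vecMulVec_single [Fintype ι] [LinearOrder ι] {u : ι → R} {i : ι}
    (hu : ∀ a, i < a → u a = 0) (hi : IsUnit (1 + u i)) :
    IsUnit (1 + vecMulVec u (Pi.single i 1)) := by
  rw [isUnit_iff_isUnit_det,
    det_of_isUpperTriangular (blockTriangular_one_add_vecMulVec_single hu),
    Finset.prod_eq_single i (fun a _ hai => by simp [add_apply, vecMulVec_apply, hai])
      (by simp)]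
  simpa [add_apply, vecMulVec_apply] using hi

theorem exists_blockTriangular_mulVec_eq_single {F : Type*} [Field F] [Fintype ι]
    [LinearOrder ι] {w : ι → F} {i : ι} (hwi : w i ≠ 0) (hw : ∀ a, i < a → w a = 0) :
    ∃ E : Matrix ι ι F, E.BlockTriangular id ∧ IsUnit E ∧ E *ᵥ w = Pi.single i 1 ∧
      ∀ x, x i = 0 → E *ᵥ x = x := by
  set u := (w i)⁻¹ • (Pi.single i 1 - w)
  have hu : ∀ a, i < a → u a = 0 := fun a ha => by
    simp [u, hw a ha, Pi.single_eq_of_ne ha.ne']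
  have hui : 1 + u i = (w i)⁻¹ := by
    simp [u, mul_sub, inv_mul_cancel₀ hwi]
  refine ⟨_, blockTriangular_one_add_vecMulVec_single hu,
    isUnit_one_add_vecMulVec_single hu (hui ▸ (inv_ne_zero hwi).isUnit), ?_, fun x hx => ?_⟩
  · rw [one_add_vecMulVec_single_mulVec, smul_inv_smul₀ hwi, add_sub_cancel]
  · rw [one_add_vecMulVec_single_mulVec, hx, zero_smul, add_zero]

end Elementary

section

variable {ι κ : Type*} [Fintype ι] [DecidableEq ι] [LinearOrder ι]
  [Fintype κ] [DecidableEq κ] [LinearOrder κ] {R : Type*} [CommRing R]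

def UpperTriangularEquiv (A B : Matrix ι κ R) : Prop :=
  ∃ (T : Matrix κ κ R) (S : Matrix ι ι R), T.BlockTriangular id ∧ S.BlockTriangular id ∧
    IsUnit T ∧ IsUnit S ∧ B = S⁻¹ * A * T

namespace UpperTriangularEquiv

theorem refl (A : Matrix ι κ R) : UpperTriangularEquiv A A :=
  ⟨1, 1, blockTriangular_one, blockTriangular_one, isUnit_one, isUnit_one, by simp⟩

theorem trans {A B C : Matrix ι κ R} (hAB : UpperTriangularEquiv A B)
    (hBC : UpperTriangularEquiv B C) : UpperTriangularEquiv A C := by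
  obtain ⟨T, S, hT, hS, hTu, hSu, rfl⟩ := hAB
  obtain ⟨T', S', hT', hS', hT'u, hS'u, rfl⟩ := hBC
  refine ⟨T * T', S * S', hT.mul hT', hS.mul hS', hTu.mul hT'u, hSu.mul hS'u, ?_⟩
  simp only [Matrix.mul_inv_rev, Matrix.mul_assoc]

theorem mul_right (A : Matrix ι κ R) {T : Matrix κ κ R} (hT : T.BlockTriangular id)
    (hTu : IsUnit T) : UpperTriangularEquiv A (A * T) :=
  ⟨T, 1, hT, blockTriangular_one, hTu, isUnit_one, by simp⟩

theorem mul_left (A : Matrix ι κ R) {E : Matrix ι ι R} (hE : E.BlockTriangular id)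
    (hEu : IsUnit E) : UpperTriangularEquiv A (E * A) := by
  have := hEu.invertible
  refine ⟨1, E⁻¹, blockTriangular_one, blockTriangular_inv_of_blockTriangular hE, isUnit_one,
    isUnit_nonsing_inv_iff.mpr hEu, ?_⟩
  rw [nonsing_inv_nonsing_inv E ((isUnit_iff_isUnit_det E).mp hEu), Matrix.mul_one]

end UpperTriangularEquiv

end

section SimpleCol

variable {F : Type*} [Field F] {n m : ℕ}

def IsSimpleColLT (M : Matrix (Fin n) (Fin m) F) (k : ℕ) : Prop :=
  (∀ j : Fin m, (j : ℕ) < k → Mᵀ j = 0 ∨ ∃ i, Mᵀ j = Pi.single i 1) ∧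
  ∀ j j' : Fin m, (j : ℕ) < k → (j' : ℕ) < k → Mᵀ j ≠ 0 → Mᵀ j = Mᵀ j' → j = j'

theorem isSimpleColLT_zero (M : Matrix (Fin n) (Fin m) F) : M.IsSimpleColLT 0 :=
  ⟨fun _ hj => absurd hj (Nat.not_lt_zero _), fun _ _ hj => absurd hj (Nat.not_lt_zero _)⟩

namespace IsSimpleColLT

variable {M N : Matrix (Fin n) (Fin m) F} {k : ℕ}

theorem isSimpleCol (h : M.IsSimpleColLT m) : M.IsSimpleCol :=
  ⟨fun j => h.1 j j.isLt, fun j j' => h.2 j j' j.isLt j'.isLt⟩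

theorem congr (h : M.IsSimpleColLT k) (hNM : ∀ j : Fin m, (j : ℕ) < k → Nᵀ j = Mᵀ j) :
    N.IsSimpleColLT k := by
  refine ⟨fun j hj => hNM j hj ▸ h.1 j hj, fun j j' hj hj' hne heq => ?_⟩
  rw [hNM j hj, hNM j' hj'] at heq
  exact h.2 j j' hj hj' (hNM j hj ▸ hne) heq

theorem succ {q : Fin m} (h : M.IsSimpleColLT q)
    (hq : Mᵀ q = 0 ∨ ∃ i, Mᵀ q = Pi.single i 1)
    (hsupp : ∀ i, M i q ≠ 0 → ∀ j : Fin m, j < q → M i j = 0) :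
    M.IsSimpleColLT (q + 1) := by
  have hnew : ∀ j : Fin m, j < q → Mᵀ q = Mᵀ j → Mᵀ q = 0 := by
    intro j hj heq
    by_contra h0
    obtain ⟨i, hi⟩ := Function.ne_iff.mp h0
    exact hi (by rw [congrFun heq i]; exact hsupp i hi j hj)
  have hcases : ∀ j : Fin m, (j : ℕ) < q + 1 → (j : ℕ) < q ∨ j = q := fun j hj =>
    (Nat.lt_succ_iff_lt_or_eq.mp hj).imp_right Fin.ext
  refine ⟨fun j hj => ?_, fun j j' hj hj' hne heq => ?_⟩
  · rcases hcases j hj with hj | rfl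
    exacts [h.1 j hj, hq]
  rcases hcases j hj with hj | rfl <;> rcases hcases j' hj' with hj' | rfl
  · exact h.2 j j' hj hj' hne heq
  · exact absurd (hnew j hj heq.symm) (heq ▸ hne)
  · exact absurd (hnew j' hj' heq) hne
  · rfl

/-- In the pivot row `p` of column `j`, the earlier columns are zero except for column `j`. -/
theorem mulVec_apply_of_col_eq_single (h : M.IsSimpleColLT k) {j : Fin m} {p : Fin n}
    (hj : (j : ℕ) < k) (hp : Mᵀ j = Pi.single p 1) {c : Fin m → F}
    (hc : ∀ j' : Fin m, k ≤ j' → c j' = 0) : (M *ᵥ c) p = c j := by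
  have hMp : M p j = 1 := by simpa using congrFun hp p
  rw [mulVec, dotProduct, Finset.sum_eq_single j (fun j' _ hj' => ?_) (by simp), hMp, one_mul]
  rcases lt_or_ge (j' : ℕ) k with hj'k | hj'k
  · suffices M p j' = 0 by rw [this, zero_mul]
    rcases h.1 j' hj'k with h0 | ⟨p', hp'⟩
    · exact congrFun h0 p
    · have hpp' : p ≠ p' := by
        rintro rfl
        exact hj' (h.2 j' j hj'k hj (by simp [hp']) (hp'.trans hp.symm))
      simpa [hpp'] using congrFun hp' p
  · rw [hc j' hj'k, mul_zero]

theorem exists_clear_pivot_rows {q : Fin m} (h : M.IsSimpleColLT q) :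
    ∃ N, UpperTriangularEquiv M N ∧ N.IsSimpleColLT q ∧
      ∀ i, N i q ≠ 0 → ∀ j : Fin m, j < q → N i j = 0 := by
  -- for a simple column `Mᵀ j = e_p`, `Mᵀ j ⬝ᵥ Mᵀ q` is the entry of column `q` in row `p`
  set c : Fin m → F := fun j => if j < q then -(Mᵀ j ⬝ᵥ Mᵀ q) else 0
  have hc : ∀ j : Fin m, (q : ℕ) ≤ j → c j = 0 := fun j hj => if_neg (not_lt.mpr hj)
  have hcq : ∀ a, q < a → c a = 0 := fun a ha => hc a ha.le
  have hT := blockTriangular_one_add_vecMulVec_single hcq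
  have hTu := isUnit_one_add_vecMulVec_single hcq (by simp [hc q le_rfl])
  refine ⟨_, .mul_right M hT hTu, h.congr fun j hj => ?_, fun i hi j hj => ?_⟩
  · funext i
    simp [mul_one_add_vecMulVec_single_apply, Pi.single_eq_of_ne (Fin.ne_of_lt hj)]
  rw [mul_one_add_vecMulVec_single_apply, Pi.single_eq_of_ne (Fin.ne_of_lt hj), mul_zero,
    add_zero]
  by_contra hij
  obtain ⟨p, hp⟩ := (h.1 j hj).resolve_left fun h0 => hij (congrFun h0 i)
  obtain rfl : p = i := by
    by_contra hpi
    exact hij (by simpa [Pi.single_eq_of_ne (Ne.symm hpi)] using congrFun hp i)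
  apply hi
  rw [mul_one_add_vecMulVec_single_apply, Pi.single_eq_same, mul_one,
    h.mulVec_apply_of_col_eq_single hj hp hc]
  simp [c, hj, hp, single_dotProduct]

theorem exists_pivot {q : Fin m} (h : M.IsSimpleColLT q) (hq : Mᵀ q ≠ 0)
    (hsupp : ∀ i, M i q ≠ 0 → ∀ j : Fin m, j < q → M i j = 0) :
    ∃ N, UpperTriangularEquiv M N ∧ N.IsSimpleColLT (q + 1) := by
  classical
  obtain ⟨i₀, hi₀, hmax⟩ := (Finset.univ.filter fun i => M i q ≠ 0).exists_max_image id
    (by simpa [Finset.filter_nonempty_iff, Function.ne_iff] using hq)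
  simp only [Finset.mem_filter, Finset.mem_univ, true_and, id] at hi₀ hmax
  obtain ⟨E, hE, hEu, hEq, hEfix⟩ := exists_blockTriangular_mulVec_eq_single (w := Mᵀ q) hi₀
    fun a ha => by_contra fun h => (hmax a h).not_gt ha
  have hcol : ∀ j, (E * M)ᵀ j = E *ᵥ Mᵀ j := fun j => rfl
  have hfix : ∀ j : Fin m, j < q → (E * M)ᵀ j = Mᵀ j := fun j hj =>
    (hcol j).trans (hEfix _ (hsupp i₀ hi₀ j hj))
  refine ⟨E * M, .mul_left M hE hEu, (h.congr hfix).succ (Or.inr ⟨i₀, hEq⟩) ?_⟩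
  intro i hi j hj
  obtain rfl : i = i₀ := by
    by_contra hne
    exact hi (by simpa [Pi.single_eq_of_ne hne] using congrFun ((hcol q).trans hEq) i)
  exact (congrFun (hfix j hj) i).trans (hsupp i hi₀ j hj)

theorem exists_succ {q : Fin m} (h : M.IsSimpleColLT q) :
    ∃ N, UpperTriangularEquiv M N ∧ N.IsSimpleColLT (q + 1) := by
  obtain ⟨N, hMN, hN, hsupp⟩ := h.exists_clear_pivot_rows
  by_cases hq : Nᵀ q = 0
  · exact ⟨N, hMN, hN.succ (Or.inl hq) hsupp⟩
  · obtain ⟨N', hNN', hN'⟩ := hN.exists_pivot hq hsupp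
    exact ⟨N', hMN.trans hNN', hN'⟩

end IsSimpleColLT

theorem exists_upperTriangularEquiv_isSimpleColLT (D : Matrix (Fin n) (Fin m) F) :
    ∀ k ≤ m, ∃ M, UpperTriangularEquiv D M ∧ M.IsSimpleColLT k
  | 0, _ => ⟨D, .refl D, isSimpleColLT_zero D⟩
  | k + 1, hk => by
    obtain ⟨M, hDM, hM⟩ := exists_upperTriangularEquiv_isSimpleColLT D k (by omega)
    obtain ⟨N, hMN, hN⟩ := hM.exists_succ (q := ⟨k, hk⟩)
    exact ⟨N, hDM.trans hMN, hN⟩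

end SimpleCol

end Matrix

/-- Existence of the simple normal form under triangular equivalence. -/
theorem exists_simple_normal_form {F : Type*} [Field F] {n m : ℕ}
    (D : Matrix (Fin n) (Fin m) F) :
    ∃ (T : Matrix (Fin m) (Fin m) F) (S : Matrix (Fin n) (Fin n) F),
      T.BlockTriangular id ∧ S.BlockTriangular id ∧ IsUnit T ∧ IsUnit S ∧
      (S⁻¹ * D * T).IsSimpleCol := by
  obtain ⟨M, ⟨T, S, hT, hS, hTu, hSu, rfl⟩, hM⟩ :=
    Matrix.exists_upperTriangularEquiv_isSimpleColLT D m le_rfl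
  exact ⟨T, S, hT, hS, hTu, hSu, hM.isSimpleCol⟩
end

section
/- Let F be a field and let M, M' be two simple n×m matrices over F (every column zero or a standard basis vector, nonzero columns pairwise distinct). If there exist invertible upper triangular matrices T ∈ GL(m,F) and S ∈ GL(n,F) with M' = S⁻¹ M T, then M = M'. (Uniqueness of the simple normal form under triangular equivalence.) -/
/-!
If column `j` of `M'` is `e_p`, then entry `(p, j)` of `S * M' = M * T` is `S p p ≠ 0`, so
`∑ k, M p k * T k j ≠ 0` and, `T` being upper triangular, `e_p` is a column of `M` at some
`k ≤ j`. The same holds with `M` and `M'` swapped, via `S⁻¹ * M = M' * T⁻¹`. Going back and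
forth, and using that `e_p` occurs at most once in a simple matrix, `e_p` sits in the same column
of `M` and `M'`; so the two matrices have the same nonzero columns.
-/

theorem apply_eq_of_exists_le_apply_eq {α β : Type*} [PartialOrder α] {c c' : α → β} {x : β}
    (hc : ∀ k k', c k = x → c k' = x → k = k')
    (h : ∀ j, c' j = x → ∃ k ≤ j, c k = x) (h' : ∀ j, c j = x → ∃ k ≤ j, c' k = x)
    {j : α} (hj : c j = x) : c' j = x := by
  obtain ⟨k, hkj, hk⟩ := h' j hj
  obtain ⟨k', hk'k, hk'⟩ := h k hk
  obtain rfl : k' = j := hc k' j hk' hj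
  rwa [le_antisymm hkj hk'k] at hk

theorem Pi.eq_of_forall_eq_single_iff {n R : Type*} [DecidableEq n] [MulZeroOneClass R]
    [NeZero (1 : R)] {u v : n → R} (hu : u = 0 ∨ ∃ i, u = Pi.single i 1)
    (hv : v = 0 ∨ ∃ i, v = Pi.single i 1) (h : ∀ p, u = Pi.single p 1 ↔ v = Pi.single p 1) :
    u = v := by
  obtain rfl | ⟨p, rfl⟩ := hu
  · obtain rfl | ⟨q, rfl⟩ := hv
    · rfl
    · simpa using (h q).2 rfl
  · exact ((h p).1 rfl).symm

namespace Matrix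

theorem IsUpperTriangular.isUnit_diag {n R : Type*} [Fintype n] [LinearOrder n] [CommRing R]
    {S : Matrix n n R} (hS : S.IsUpperTriangular) (hSu : IsUnit S) (p : n) : IsUnit (S p p) := by
  rw [isUnit_iff_isUnit_det, det_of_isUpperTriangular hS, IsUnit.prod_univ_iff] at hSu
  exact hSu p

theorem exists_le_col_eq_single_of_mul_eq {n m R : Type*} [Fintype n] [DecidableEq n]
    [Fintype m] [LinearOrder m] [Semiring R] {M M' : Matrix n m R} {S : Matrix n n R}
    {T : Matrix m m R} (hM : ∀ k, Mᵀ k = 0 ∨ ∃ i, Mᵀ k = Pi.single i 1)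
    (hT : T.IsUpperTriangular) (h : S * M' = M * T) {j : m} {p : n} (hSp : S p p ≠ 0)
    (hj : M'ᵀ j = Pi.single p 1) : ∃ k ≤ j, Mᵀ k = Pi.single p 1 := by
  have hM'j (i : n) : M' i j = (Pi.single p 1 : n → R) i := congrFun hj i
  have hMT : ∑ k, M p k * T k j ≠ 0 := by
    rw [← mul_apply, ← h, mul_apply]
    simpa [hM'j, Pi.single_apply] using hSp
  obtain ⟨k, -, hk⟩ := Finset.exists_ne_zero_of_sum_ne_zero hMT
  have hMpk : M p k ≠ 0 := left_ne_zero_of_mul hk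
  refine ⟨k, not_lt.1 fun hjk => right_ne_zero_of_mul hk (hT hjk), ?_⟩
  obtain hk0 | ⟨q, hq⟩ := hM k
  · exact absurd (congrFun hk0 p) hMpk
  · obtain rfl : q = p := by
      by_contra hqp
      exact hMpk (by simpa [Pi.single_apply, Ne.symm hqp] using congrFun hq p)
    exact hq

namespace IsSimpleCol

variable {F : Type*} [Field F] {n m : ℕ} {M M' : Matrix (Fin n) (Fin m) F}

theorem eq_of_col_eq_single (hM : M.IsSimpleCol) {k k' : Fin m} {p : Fin n}
    (hk : Mᵀ k = Pi.single p 1) (hk' : Mᵀ k' = Pi.single p 1) : k = k' :=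
  hM.2 k k' (by rw [show (fun i => M i k) = Mᵀ k from rfl, hk]; simp) (hk.trans hk'.symm)

theorem col_eq_single_iff_of_mul_eq (hM : M.IsSimpleCol) (hM' : M'.IsSimpleCol)
    {S S' : Matrix (Fin n) (Fin n) F} {T T' : Matrix (Fin m) (Fin m) F}
    (hT : T.IsUpperTriangular) (hT' : T'.IsUpperTriangular)
    (hS : ∀ p, S p p ≠ 0) (hS' : ∀ p, S' p p ≠ 0)
    (h : S * M' = M * T) (h' : S' * M = M' * T') (j : Fin m) (p : Fin n) :
    Mᵀ j = Pi.single p 1 ↔ M'ᵀ j = Pi.single p 1 :=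
  have hle (j) := exists_le_col_eq_single_of_mul_eq hM.1 hT h (hS p) (j := j)
  have hle' (j) := exists_le_col_eq_single_of_mul_eq hM'.1 hT' h' (hS' p) (j := j)
  ⟨apply_eq_of_exists_le_apply_eq (fun _ _ => hM.eq_of_col_eq_single) hle hle',
    apply_eq_of_exists_le_apply_eq (fun _ _ => hM'.eq_of_col_eq_single) hle' hle⟩

theorem ext_of_col_eq_single_iff (hM : M.IsSimpleCol) (hM' : M'.IsSimpleCol)
    (h : ∀ j p, Mᵀ j = Pi.single p 1 ↔ M'ᵀ j = Pi.single p 1) : M = M' := by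
  rw [← transpose_inj]
  funext j
  exact Pi.eq_of_forall_eq_single_iff (hM.1 j) (hM'.1 j) (h j)

end IsSimpleCol

end Matrix

/-- Uniqueness of the simple normal form under triangular equivalence. -/
theorem simple_normal_form_unique {F : Type*} [Field F] {n m : ℕ}
    (M M' : Matrix (Fin n) (Fin m) F)
    (hM : M.IsSimpleCol) (hM' : M'.IsSimpleCol)
    (T : Matrix (Fin m) (Fin m) F) (S : Matrix (Fin n) (Fin n) F)
    (hT : T.BlockTriangular id) (hS : S.BlockTriangular id)
    (hTu : IsUnit T) (hSu : IsUnit S)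
    (h : M' = S⁻¹ * M * T) :
    M = M' := by
  have : Invertible T := hTu.invertible
  have : Invertible S := hSu.invertible
  have hSM' : S * M' = M * T := by
    rw [h, Matrix.mul_assoc, Matrix.mul_inv_cancel_left_of_invertible]
  have hSM : S⁻¹ * M = M' * T⁻¹ := by
    rw [h, Matrix.mul_inv_cancel_right_of_invertible]
  have hSinv : S⁻¹.IsUpperTriangular := Matrix.blockTriangular_inv_of_blockTriangular hS
  have hSdiag (p) := (Matrix.IsUpperTriangular.isUnit_diag hS hSu p).ne_zero
  have hSinvdiag (p) :=
    (Matrix.IsUpperTriangular.isUnit_diag hSinv (Matrix.isUnit_nonsing_inv_iff.2 hSu) p).ne_zero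
  exact hM.ext_of_col_eq_single_iff hM' <| hM.col_eq_single_iff_of_mul_eq hM' hT
    (Matrix.blockTriangular_inv_of_blockTriangular hT) hSdiag hSinvdiag hSM' hSM
end

section
/- Let F be a field and A ∈ GL(n,F). There exists a unique permutation σ ∈ S_n such that for all i, j: rank of the submatrix of A on rows ≥ i and columns ≤ j equals #{j' ≤ j : σ(j') ≥ i}. -/
/-!
Fix a row `i` and call column `j` a pivot at level `i` if its part in the rows `≥ i` is not
spanned by the corresponding parts of the columns to its left. The rank of the southwest block
on rows `≥ i` and columns `≤ j` is then the number of pivots at level `i` among the columns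
`≤ j`. Deleting rows can only destroy pivots, so column `j` is a pivot exactly at the levels
`i ≤ σ j` for some `σ j`. As `A` is invertible, the block on rows `≥ i` and all columns has full
row rank, so exactly as many columns satisfy `i ≤ σ j` as there are rows `≥ i`; this forces `σ`
to be a permutation. Conversely the counts determine `σ`: the count up to column `j` minus the
count up to the previous column is the indicator of `i ≤ σ j`.
-/

open Module Submodule Finset

/-- `swRank M i j` is the rank of the "southwest" submatrix of `M` on
rows `≥ i` and columns `≤ j`. -/
noncomputable def swRank {F : Type*} [Field F] {n : ℕ}
    (M : Matrix (Fin n) (Fin n) F) (i : Fin n) (j : Fin n) : ℕ :=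
  (M.submatrix (fun a : {a : Fin n // i ≤ a} => (a : Fin n))
    (fun b : {b : Fin n // b ≤ j} => (b : Fin n))).rank

section RankOfInitialSegments

variable {K V ι : Type*} [DivisionRing K] [AddCommGroup V] [Module K V] [Module.Finite K V]
  [LinearOrder ι]

open scoped Classical in
theorem finrank_span_insert (x : V) (s : Set V) :
    finrank K (span K (insert x s)) = finrank K (span K s) + if x ∈ span K s then 0 else 1 := by
  split_ifs with hx
  · rw [span_insert_eq_span hx, add_zero]
  · rw [span_insert, sup_comm, finrank_sup_span_singleton hx]

theorem Finset.coe_eq_Iio_of_isLowerSet_insert {a : ι} {s : Finset ι} (hlt : ∀ x ∈ s, x < a)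
    (hs : IsLowerSet (↑(insert a s) : Set ι)) : (s : Set ι) = Set.Iio a := by
  refine Set.Subset.antisymm (fun x hx => hlt x hx) fun x hx => ?_
  have hx' : x ∈ insert a s := hs (le_of_lt hx) (mem_insert_self a s)
  exact (mem_insert.1 hx').resolve_left (ne_of_lt hx)

open scoped Classical in
theorem finrank_span_image_eq_card_filter_notMem_span (v : ι → V) (s : Finset ι)
    (hs : IsLowerSet (s : Set ι)) :
    finrank K (span K (v '' s)) = #{j ∈ s | v j ∉ span K (v '' Set.Iio j)} := by
  induction s using Finset.induction_on_max with
  | empty => simp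
  | insert a s hlt ih =>
    have hsa : (s : Set ι) = Set.Iio a := coe_eq_Iio_of_isLowerSet_insert hlt hs
    have ha : a ∉ s := fun h => lt_irrefl a (hlt a h)
    rw [coe_insert, Set.image_insert_eq, finrank_span_insert, ih (hsa ▸ isLowerSet_Iio a),
      filter_insert, hsa]
    split_ifs with h <;> simp [card_insert_of_notMem, ha]

end RankOfInitialSegments

section Counting
variable {ι α : Type*} [Fintype ι] [LinearOrder ι]

theorem card_filter_le_and (P : ι → Prop) [DecidablePred P] (j : ι) :
    #{j' | j' ≤ j ∧ P j'} = #{j' | j' < j ∧ P j'} + if P j then 1 else 0 := by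
  split_ifs with hj
  · rw [← card_insert_of_notMem (a := j) (by simp)]
    congr 1
    ext j'
    simp only [mem_filter, mem_univ, true_and, mem_insert, le_iff_lt_or_eq]
    grind
  · rw [add_zero]
    congr 1
    ext j'
    simp only [mem_filter, mem_univ, true_and, le_iff_lt_or_eq]
    grind

theorem eq_of_forall_card_filter_le_and_le_eq [PartialOrder α] [DecidableLE α] {f g : ι → α}
    (h : ∀ a j, #{j' | j' ≤ j ∧ a ≤ f j'} = #{j' | j' ≤ j ∧ a ≤ g j'}) : f = g := by
  funext j
  induction j using WellFoundedLT.induction with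
  | _ j ih =>
    refine eq_of_forall_le_iff fun a => ?_
    have hbefore : #{j' | j' < j ∧ a ≤ f j'} = #{j' | j' < j ∧ a ≤ g j'} :=
      congrArg card <| filter_congr fun j' _ => and_congr_right fun hj' => by rw [ih j' hj']
    have hj := h a j
    rw [card_filter_le_and, card_filter_le_and, hbefore] at hj
    by_cases hf : a ≤ f j <;> by_cases hg : a ≤ g j <;> simp [hf, hg] at hj ⊢

theorem card_filter_eq_eq_of_forall_card_filter_le_eq [LinearOrder α] [SuccOrder α] {f g : ι → α}
    (h : ∀ a, #{j | a ≤ f j} = #{j | a ≤ g j}) (a : α) : #{j | f j = a} = #{j | g j = a} := by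
  have hlt : ∀ k : ι → α, #{j | k j = a} = #{j | a ≤ k j} - #{j | a < k j} := fun k => by
    rw [← card_sdiff_of_subset (monotone_filter_right _ fun _ _ => le_of_lt)]
    congr 1
    ext j
    simp [le_antisymm_iff, and_comm]
  have hlt' : #{j | a < f j} = #{j | a < g j} := by
    by_cases ha : IsMax a
    · simp [ha.not_lt]
    · simpa only [Order.succ_le_iff_of_not_isMax ha] using h (Order.succ a)
  rw [hlt, hlt, h, hlt']

theorem bijective_of_forall_card_filter_le_eq [SuccOrder ι] {f : ι → ι}
    (h : ∀ a, #{j | a ≤ f j} = #{j | a ≤ j}) : Function.Bijective f := by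
  refine Finite.injective_iff_bijective.1 fun x y hxy => ?_
  have hfiber := card_filter_eq_eq_of_forall_card_filter_le_eq h (f y)
  simp only [filter_eq', mem_univ, if_true, card_singleton] at hfiber
  exact card_le_one.1 hfiber.le x (by simpa using hxy) y (by simp)

end Counting

section Pivots

variable {F m : Type*} [Field F] [LinearOrder m]

def lowerCol (A : Matrix m m F) (i j : m) : {a : m // i ≤ a} → F := fun a => A a j

def IsPivot (A : Matrix m m F) (i j : m) : Prop :=
  lowerCol A i j ∉ span F (lowerCol A i '' Set.Iio j)

theorem IsPivot.of_le {A : Matrix m m F} {i i' j : m} (hp : IsPivot A i' j) (h : i ≤ i') :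
    IsPivot A i j := fun hmem => hp <| by
  have := apply_mem_span_image_of_mem_span
    (LinearMap.funLeft F F fun a : {a // i' ≤ a} => (⟨a, h.trans a.2⟩ : {a // i ≤ a})) hmem
  rwa [Set.image_image] at this

variable [Fintype m] [DecidableEq m]

theorem isPivot_of_isUnit {A : Matrix m m F} (hA : IsUnit A) {i : m} (hi : ∀ a, i ≤ a) (j : m) :
    IsPivot A i j := by
  have hinj : Function.Injective (LinearMap.funLeft F F fun a : {a // i ≤ a} => (a : m)) :=
    LinearMap.funLeft_injective_of_surjective _ _ _ fun a => ⟨⟨a, hi a⟩, rfl⟩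
  exact ((Matrix.linearIndependent_cols_iff_isUnit.2 hA).map' _
    (LinearMap.ker_eq_bot_of_injective hinj)).notMem_span_image (lt_irrefl j)

theorem span_range_lowerCol_eq_top {A : Matrix m m F} (hA : IsUnit A) (i : m) :
    span F (Set.range (lowerCol A i)) = ⊤ := by
  have hcols : span F (Set.range A.col) = ⊤ := by
    rw [← Matrix.range_mulVecLin, LinearMap.range_eq_top]
    exact Matrix.mulVec_surjective_iff_isUnit.2 hA
  have : lowerCol A i = LinearMap.funLeft F F (fun a : {a // i ≤ a} => (a : m)) ∘ A.col := rfl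
  rw [this, Set.range_comp, span_image, hcols, Submodule.map_top, LinearMap.range_eq_top]
  exact LinearMap.funLeft_surjective_of_injective _ _ _ Subtype.val_injective

theorem exists_isPivot {A : Matrix m m F} (hA : IsUnit A) (j : m) : ∃ i, IsPivot A i j :=
  ⟨univ.min' ⟨j, mem_univ j⟩, isPivot_of_isUnit hA (fun a => min'_le _ a (mem_univ a)) j⟩

open scoped Classical in
noncomputable def pivotRow {A : Matrix m m F} (hA : IsUnit A) (j : m) : m :=
  ({i | IsPivot A i j} : Finset m).max' (filter_nonempty_iff.2 (by simpa using exists_isPivot hA j))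

open scoped Classical in
theorem isPivot_pivotRow {A : Matrix m m F} (hA : IsUnit A) (j : m) :
    IsPivot A (pivotRow hA j) j :=
  (mem_filter.1 (max'_mem ({i | IsPivot A i j} : Finset m) _)).2

open scoped Classical in
theorem isPivot_iff_le_pivotRow {A : Matrix m m F} (hA : IsUnit A) (i j : m) :
    IsPivot A i j ↔ i ≤ pivotRow hA j :=
  ⟨fun h => le_max' _ _ (by simpa using h), (isPivot_pivotRow hA j).of_le⟩

open scoped Classical in
theorem card_filter_le_pivotRow {A : Matrix m m F} (hA : IsUnit A) (i : m) :
    #{j | i ≤ pivotRow hA j} = #{j | i ≤ j} := by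
  have h := finrank_span_image_eq_card_filter_notMem_span (K := F) (lowerCol A i) univ
    (by simp [isLowerSet_univ])
  rw [coe_univ, Set.image_univ, span_range_lowerCol_eq_top hA, finrank_top,
    finrank_fintype_fun_eq_card, Fintype.card_subtype] at h
  simp only [h, ← isPivot_iff_le_pivotRow hA, IsPivot]

end Pivots

section SouthwestRank
variable {F : Type*} [Field F] {n : ℕ}

theorem swRank_eq_finrank_span (A : Matrix (Fin n) (Fin n) F) (i j : Fin n) :
    swRank A i j = finrank F (span F (lowerCol A i '' Set.Iic j)) := by
  have hcols : (A.submatrix (fun a : {a // i ≤ a} => (a : Fin n))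
      (fun b : {b // b ≤ j} => (b : Fin n))).col = lowerCol A i ∘ Subtype.val := rfl
  rw [swRank, Matrix.rank_eq_finrank_span_cols, hcols, Set.range_comp, Subtype.range_coe_subtype]
  rfl

open scoped Classical in
theorem swRank_eq_card_isPivot (A : Matrix (Fin n) (Fin n) F) (i j : Fin n) :
    swRank A i j = #{j' | j' ≤ j ∧ IsPivot A i j'} := by
  have hIic : Set.Iic j = ↑({j' | j' ≤ j} : Finset (Fin n)) := by simp [Set.Iic]
  rw [swRank_eq_finrank_span, hIic, finrank_span_image_eq_card_filter_notMem_span _ _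
    (hIic ▸ isLowerSet_Iic j), filter_filter]
  convert rfl

end SouthwestRank

/-- For an invertible matrix `A` there is a unique permutation `σ` such that
every southwest rank of `A` counts the points of the graph of `σ` in the
corresponding lower-left region. -/
theorem exists_unique_bruhat_permutation {F : Type*} [Field F] {n : ℕ}
    (A : Matrix (Fin n) (Fin n) F) (hA : IsUnit A) :
    ∃! σ : Equiv.Perm (Fin n),
      ∀ (i j : Fin n),
        swRank A i j = Nat.card {j' : Fin n // j' ≤ j ∧ i ≤ σ j'} := by
  classical
  have hcard (σ : Equiv.Perm (Fin n)) (i j : Fin n) :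
      Nat.card {j' // j' ≤ j ∧ i ≤ σ j'} = #{j' | j' ≤ j ∧ i ≤ σ j'} := by
    rw [Nat.card_eq_fintype_card, Fintype.card_subtype]
  have hrank (i j : Fin n) : swRank A i j = #{j' | j' ≤ j ∧ i ≤ pivotRow hA j'} := by
    simp only [swRank_eq_card_isPivot, isPivot_iff_le_pivotRow hA]
  let σ := Equiv.ofBijective _ (bijective_of_forall_card_filter_le_eq (card_filter_le_pivotRow hA))
  refine ⟨σ, fun i j => (hrank i j).trans (hcard σ i j).symm, fun τ hτ => ?_⟩
  refine Equiv.coe_fn_injective (eq_of_forall_card_filter_le_and_le_eq fun i j => ?_)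
  rw [← hcard, ← hτ i j, hrank]
  rfl
end

section
/- Let F be a field and consider based finite-dimensional F-vector spaces C_{k+1}, C_k with a linear map ∂ : C_{k+1} → C_k. Suppose p is a basis vector of C_{k+1} whose ∂-image, written in the basis of C_k, has a nonzero coefficient on some basis vector q. Then for any conjugation δ = T'⁻¹ ∘ ∂ ∘ T by invertible upper triangular matrices T, T', there exists a basis vector p' of C_{k+1} with index ≤ index of p and a basis vector q' with index ≥ index of q such that the coefficient of q' in δ(p') is nonzero. (Triangular equivalence cannot move support strictly up in the source or strictly down in the target simultaneously for all entries.) -/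
/-! Multiplying by upper triangular matrices on both sides preserves the vanishing of the
quadrant southwest of `(i, j)`. Since `T⁻¹` is again upper triangular and
`M = S * (S⁻¹ * M * T) * T⁻¹`, a vanishing quadrant of `S⁻¹ * M * T` would force `M i j = 0`. -/

namespace Matrix

variable {l m n R : Type*} [Fintype m] [LinearOrder m] [LinearOrder n] [NonUnitalNonAssocSemiring R]

theorem BlockTriangular.mul_apply_eq_zero {S : Matrix m m R} (hS : S.BlockTriangular id)
    {N : Matrix m l R} {i : m} {j : l} (hN : ∀ i', i ≤ i' → N i' j = 0) :
    (S * N) i j = 0 := by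
  refine Finset.sum_eq_zero fun i' _ => ?_
  rcases le_or_gt i i' with hi | hi
  · exact mul_eq_zero_of_right _ (hN i' hi)
  · exact mul_eq_zero_of_left (hS hi) _

theorem BlockTriangular.apply_mul_eq_zero [Fintype n] {T : Matrix n n R}
    (hT : T.BlockTriangular id) {N : Matrix l n R} {i : l} {j : n}
    (hN : ∀ j', j' ≤ j → N i j' = 0) :
    (N * T) i j = 0 := by
  refine Finset.sum_eq_zero fun j' _ => ?_
  rcases le_or_gt j' j with hj | hj
  · exact mul_eq_zero_of_left (hN j' hj) _
  · exact mul_eq_zero_of_right _ (hT hj)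

theorem BlockTriangular.mul_mul_apply_eq_zero [Fintype n] {S : Matrix m m R} {T : Matrix n n R}
    (hS : S.BlockTriangular id) (hT : T.BlockTriangular id) {N : Matrix m n R} {i : m} {j : n}
    (hN : ∀ i' j', i ≤ i' → j' ≤ j → N i' j' = 0) :
    (S * N * T) i j = 0 :=
  hT.apply_mul_eq_zero fun _ hj => hS.mul_apply_eq_zero fun i' hi => hN i' _ hi hj

end Matrix

/-- Triangular equivalence cannot move the support strictly up in the source
and strictly down in the target: if `M i j ≠ 0` then `S⁻¹ * M * T` has a
nonzero entry at some position `(i', j')` with `i' ≥ i` and `j' ≤ j`, for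
`S, T` invertible upper triangular. -/
theorem support_southwest_persists {F : Type*} [Field F] {n m : ℕ}
    (M : Matrix (Fin n) (Fin m) F)
    (S : Matrix (Fin n) (Fin n) F) (T : Matrix (Fin m) (Fin m) F)
    (hS : S.BlockTriangular id) (hT : T.BlockTriangular id)
    (hSu : IsUnit S) (hTu : IsUnit T)
    (i : Fin n) (j : Fin m) (hij : M i j ≠ 0) :
    ∃ (i' : Fin n) (j' : Fin m), i ≤ i' ∧ j' ≤ j ∧ (S⁻¹ * M * T) i' j' ≠ 0 := by
  by_contra! h
  have hT' : T⁻¹.BlockTriangular id := by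
    have := hTu.invertible
    exact Matrix.blockTriangular_inv_of_blockTriangular hT
  have hM : S * (S⁻¹ * M * T) * T⁻¹ = M := by
    rw [Matrix.mul_assoc,
      Matrix.mul_nonsing_inv_cancel_right _ _ ((Matrix.isUnit_iff_isUnit_det T).mp hTu),
      Matrix.mul_nonsing_inv_cancel_left _ _ ((Matrix.isUnit_iff_isUnit_det S).mp hSu)]
  exact hij (hM ▸ hS.mul_mul_apply_eq_zero hT' h)
end

section
/- Let F be a field and let ∂ : F^m → F^n be a linear map (matrix), with both F^m and F^n carrying ordered standard bases. Suppose ∂' = S⁻¹ ∂ T with S ∈ GL(n,F), T ∈ GL(m,F) invertible upper triangular, and both ∂ and ∂' are simple matrices. Then the pairing they define is the same: for every column j, the j-th column of ∂ is e_i if and only if the j-th column of ∂' is e_i, and the j-th column of ∂ is zero iff that of ∂' is zero. (This is the uniqueness of the Barannikov coupling, restated.) -/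
theorem Pi.single_left_injective {ι R : Type*} [DecidableEq ι] [Zero R] {r : R} (hr : r ≠ 0) :
    Function.Injective fun i : ι => Pi.single i r := by
  intro i i' h
  by_contra hne
  exact hr (by simpa [hne] using congrFun h i)

section Domination

variable {ι R : Type*} [LinearOrder ι] [DecidableEq ι] [Zero R] [One R] [NeZero (1 : R)]
  {u v : ι → R}

theorem eq_single_of_forall_exists_le
    (huv : ∀ i, u = Pi.single i 1 → ∃ i', i ≤ i' ∧ v = Pi.single i' 1)
    (hvu : ∀ i, v = Pi.single i 1 → ∃ i', i ≤ i' ∧ u = Pi.single i' 1)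
    {i : ι} (hu : u = Pi.single i 1) : v = Pi.single i 1 := by
  obtain ⟨i', hii', hv⟩ := huv i hu
  obtain ⟨i'', hi'i'', hu'⟩ := hvu i' hv
  obtain rfl : i = i'' := Pi.single_left_injective one_ne_zero (hu.symm.trans hu')
  rwa [le_antisymm hii' hi'i'']

theorem eq_zero_of_forall_exists_le (hv : v = 0 ∨ ∃ i, v = Pi.single i 1)
    (hvu : ∀ i, v = Pi.single i 1 → ∃ i', i ≤ i' ∧ u = Pi.single i' 1) (hu : u = 0) :
    v = 0 := by
  refine hv.resolve_right ?_
  rintro ⟨i, hi⟩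
  obtain ⟨i', -, hu'⟩ := hvu i hi
  exact one_ne_zero (Pi.single_eq_zero_iff.mp (hu'.symm.trans hu))

end Domination

namespace Matrix

theorem diag_ne_zero_of_isUpperTriangular {ι R : Type*} [Fintype ι] [LinearOrder ι] [CommRing R]
    [Nontrivial R] {T : Matrix ι ι R} (hT : T.IsUpperTriangular) (hTu : IsUnit T) (i : ι) :
    T i i ≠ 0 := fun hi =>
  ((isUnit_iff_isUnit_det T).mp hTu).ne_zero <| by
    rw [det_of_isUpperTriangular hT]
    exact Finset.prod_eq_zero (Finset.mem_univ i) hi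

theorem mul_apply_of_col_eq_single {l m n R : Type*} [Fintype m] [DecidableEq m]
    [NonAssocSemiring R] (A : Matrix l m R) {B : Matrix m n R} {j : n} {k : m}
    (hB : (fun a => B a j) = Pi.single k 1) (i : l) : (A * B) i j = A i k := by
  rw [mul_apply', hB, dotProduct_single, mul_one]

theorem mul_apply_of_row_eq_single {l m n R : Type*} [Fintype m] [DecidableEq m]
    [NonAssocSemiring R] {A : Matrix l m R} (B : Matrix m n R) {i : l} {k : m}
    (hA : A i = Pi.single k 1) (j : n) : (A * B) i j = B k j := by
  rw [mul_apply_eq_vecMul, hA, single_one_vecMul, row]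

variable {F : Type*} [Field F] {n m : ℕ}

theorem IsSimpleCol.row_eq_single {M : Matrix (Fin n) (Fin m) F} (hM : M.IsSimpleCol)
    {i : Fin n} {j : Fin m} (hj : (fun a => M a j) = Pi.single i 1) : M i = Pi.single j 1 := by
  ext k
  by_cases hkj : k = j
  · subst hkj
    simpa using congrFun hj i
  rw [Pi.single_eq_of_ne hkj]
  rcases hM.1 k with hk | ⟨a, ha⟩
  · exact congrFun hk i
  have hai : a ≠ i := by
    rintro rfl
    exact hkj (hM.2 k j (by simp [ha]) (ha.trans hj.symm))
  simpa [hai.symm] using congrFun ha i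

theorem IsSimpleCol.exists_le_col_eq_single {M M' : Matrix (Fin n) (Fin m) F}
    (hM : M.IsSimpleCol) (hM' : M'.IsSimpleCol) {S : Matrix (Fin n) (Fin n) F}
    {T : Matrix (Fin m) (Fin m) F} (hS : S.IsUpperTriangular) (hT : ∀ j, T j j ≠ 0)
    (h : S * M' = M * T) (j : Fin m) (i : Fin n) (hj : (fun a => M a j) = Pi.single i 1) :
    ∃ i', i ≤ i' ∧ (fun a => M' a j) = Pi.single i' 1 := by
  have hSM' : (S * M') i j ≠ 0 := by
    rw [h, mul_apply_of_row_eq_single T (hM.row_eq_single hj)]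
    exact hT j
  rcases hM'.1 j with hzero | ⟨i', hi'⟩
  · refine absurd ?_ hSM'
    rw [mul_apply', hzero, dotProduct_zero]
  · rw [mul_apply_of_col_eq_single S hi'] at hSM'
    exact ⟨i', not_lt.mp fun hlt => hSM' (hS hlt), hi'⟩

end Matrix

/-- Uniqueness of the Barannikov coupling: if two simple matrices are
triangularly equivalent, they define the same pairing — each column is the
same standard basis vector, or zero, in both. -/
theorem simple_matrices_same_coupling {F : Type*} [Field F] {n m : ℕ}
    (M M' : Matrix (Fin n) (Fin m) F)
    (hM : M.IsSimpleCol) (hM' : M'.IsSimpleCol)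
    (S : Matrix (Fin n) (Fin n) F) (T : Matrix (Fin m) (Fin m) F)
    (hS : S.BlockTriangular id) (hT : T.BlockTriangular id)
    (hSu : IsUnit S) (hTu : IsUnit T)
    (h : M' = S⁻¹ * M * T) :
    (∀ (j : Fin m) (i : Fin n),
        ((fun a => M a j) = Pi.single i (1 : F) ↔
          (fun a => M' a j) = Pi.single i (1 : F))) ∧
    (∀ j : Fin m, (fun a => M a j) = 0 ↔ (fun a => M' a j) = 0) := by
  have := hSu.invertible
  have := hTu.invertible
  have hMT : S * M' = M * T := by
    rw [h, ← Matrix.mul_assoc, ← Matrix.mul_assoc, Matrix.mul_inv_of_invertible, Matrix.one_mul]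
  have hM'T : S⁻¹ * M = M' * T⁻¹ := by
    rw [h, Matrix.mul_assoc, Matrix.mul_inv_of_invertible, Matrix.mul_one]
  have hTdiag := Matrix.diag_ne_zero_of_isUpperTriangular hT hTu
  have hTinvdiag := Matrix.diag_ne_zero_of_isUpperTriangular
    (Matrix.blockTriangular_inv_of_blockTriangular hT) (Matrix.isUnit_nonsing_inv_iff.mpr hTu)
  have hMM' := hM.exists_le_col_eq_single hM' hS hTdiag hMT
  have hM'M := hM'.exists_le_col_eq_single hM
    (Matrix.blockTriangular_inv_of_blockTriangular hS) hTinvdiag hM'T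
  exact ⟨fun j _ => ⟨eq_single_of_forall_exists_le (hMM' j) (hM'M j),
      eq_single_of_forall_exists_le (hM'M j) (hMM' j)⟩,
    fun j => ⟨eq_zero_of_forall_exists_le (hM'.1 j) (hM'M j),
      eq_zero_of_forall_exists_le (hM.1 j) (hMM' j)⟩⟩
end
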